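/- arXiv:1408.6727 — 3 statements merged into one kernel-verified Lean document; each statement's English description precedes it below -/
import Mathlib

section
/- If f : [0,∞) → (0,∞) is continuous and satisfies f(t) = exp(b(t) + μt − β∫_0^t f(s) ds) for all t ≥ 0, then f(t) = e^{b(t)+μt} / (1 + β∫_0^t e^{b(s)+μs} ds) for all t ≥ 0. (Uniqueness of the solution of the integral equation defining the Verhulst functional.) -/
open MeasureTheory Real Set

/-!
Writing `F t = ∫₀ᵗ f`, the equation says `f · exp (β F) = exp (b t + μ t)`. Since
`(exp (β F))' = β f exp (β F)`, integrating gives `exp (β F t) = 1 + β ∫₀ᵗ exp (b s + μ s) ds`, and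
dividing the equation by this positive quantity yields the formula.
-/

theorem hasDerivAt_primitive_of_continuousOn_Icc {f : ℝ → ℝ} {a b x : ℝ}
    (hf : ContinuousOn f (Icc a b)) (hx : x ∈ Ioo a b) :
    HasDerivAt (fun u => ∫ s in a..u, f s) (f x) x :=
  intervalIntegral.integral_hasDerivAt_right
    ((hf.mono (Icc_subset_Icc_right hx.2.le)).intervalIntegrable_of_Icc hx.1.le)
    ((hf.mono Ioo_subset_Icc_self).stronglyMeasurableAtFilter isOpen_Ioo x hx)
    (hf.continuousAt (Icc_mem_nhds hx.1 hx.2))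

theorem exp_mul_primitive_eq_one_add_integral {f : ℝ → ℝ} {a t : ℝ} (β : ℝ) (hat : a ≤ t)
    (hf : ContinuousOn f (Icc a t)) :
    exp (β * ∫ s in a..t, f s) = 1 + β * ∫ s in a..t, f s * exp (β * ∫ r in a..s, f r) := by
  set F : ℝ → ℝ := fun u => ∫ s in a..u, f s
  have hF : ContinuousOn F (Icc a t) := by
    simpa only [uIcc_of_le hat] using intervalIntegral.continuousOn_primitive_interval
      (hf.mono (uIcc_of_le hat).subset).integrableOn_Icc
  have hderiv : ∀ x ∈ Ioo a t,
      HasDerivAt (fun u => exp (β * F u)) (β * (f x * exp (β * F x))) x := fun x hx =>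
    (((hasDerivAt_primitive_of_continuousOn_Icc hf hx).const_mul β).exp).congr_deriv (by ring)
  have hint : IntervalIntegrable (fun x => β * (f x * exp (β * F x))) volume a t :=
    (continuousOn_const.mul (hf.mul (continuousOn_const.mul hF).rexp)).intervalIntegrable_of_Icc hat
  have hFTC := intervalIntegral.integral_eq_sub_of_hasDerivAt_of_le (f := fun u => exp (β * F u))
    hat (continuousOn_const.mul hF).rexp hderiv hint
  rw [intervalIntegral.integral_const_mul] at hFTC
  simp only [F, intervalIntegral.integral_same, mul_zero, exp_zero] at hFTC
  linarith

theorem verhulst_unique_general (b : ℝ → ℝ)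
    (μ β : ℝ)
    (f : ℝ → ℝ) (hfc : ContinuousOn f (Set.Ici 0))
    (hfeq : ∀ t : ℝ, 0 ≤ t →
      f t = Real.exp (b t + μ * t - β * ∫ s in (0:ℝ)..t, f s)) :
    ∀ t : ℝ, 0 ≤ t →
      f t = Real.exp (b t + μ * t)
              / (1 + β * ∫ s in (0:ℝ)..t, Real.exp (b s + μ * s)) := by
  have hsol : ∀ s, 0 ≤ s → f s * exp (β * ∫ r in (0:ℝ)..s, f r) = exp (b s + μ * s) := by
    intro s hs
    rw [hfeq s hs, ← exp_add, sub_add_cancel]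
  intro t ht
  have hexp := exp_mul_primitive_eq_one_add_integral β ht (hfc.mono Icc_subset_Ici_self)
  rw [intervalIntegral.integral_congr fun s hs => hsol s (uIcc_of_le ht ▸ hs).1] at hexp
  rw [← hexp, ← hsol t ht, mul_div_cancel_right₀ _ (exp_pos _).ne']

/-- Uniqueness of the solution of the integral equation defining the Verhulst
functional: if `f : [0,∞) → (0,∞)` is continuous and satisfies
`f(t) = exp(b(t) + μt − β ∫_0^t f(s) ds)` for all `t ≥ 0`, then
`f(t) = e^{b(t)+μt} / (1 + β ∫_0^t e^{b(s)+μs} ds)` for all `t ≥ 0`. -/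
theorem verhulst_unique (b : ℝ → ℝ) (hb : Continuous b) (hb0 : b 0 = 0)
    (μ β : ℝ) (hβ : 0 ≤ β)
    (f : ℝ → ℝ) (hfc : ContinuousOn f (Set.Ici 0))
    (hfpos : ∀ t : ℝ, 0 ≤ t → 0 < f t)
    (hfeq : ∀ t : ℝ, 0 ≤ t →
      f t = Real.exp (b t + μ * t - β * ∫ s in (0:ℝ)..t, f s)) :
    ∀ t : ℝ, 0 ≤ t →
      f t = Real.exp (b t + μ * t)
              / (1 + β * ∫ s in (0:ℝ)..t, Real.exp (b s + μ * s)) :=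
  verhulst_unique_general b μ β f hfc hfeq
end

section
/- Let γ > 0 and define V(t) = b(t) + γ∫_0^t θ_u du. Then for every t ≥ 0, ∫_0^t e^{V(u)+μu} du = (1/(β+γ)) · ( exp((β+γ)∫_0^t θ_u du) − 1 ). (Key pathwise computation in the proof of the Girsanov-invariance theorem.) -/
open MeasureTheory Real

/-- The Verhulst functional built from a path `b`, with drift `μ` and crowding
parameter `β`: `θ_t = e^{b(t)+μt} / (1 + β ∫_0^t e^{b(s)+μs} ds)`. -/
noncomputable def verhulst (b : ℝ → ℝ) (μ β : ℝ) (t : ℝ) : ℝ :=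
  Real.exp (b t + μ * t) / (1 + β * ∫ s in (0:ℝ)..t, Real.exp (b s + μ * s))

/-!
With `A(u) = 1 + β ∫_0^u E` and `θ = E / A`, the Verhulst functional is `A' / (β A)`, so
`β ∫_0^u θ = log A(u)`, i.e. `e^{β Θ} = A` for `Θ = ∫_0^· θ`. Hence
`(e^{(β+γ) Θ})' = (β+γ) θ A e^{γ Θ} = (β+γ) E e^{γ Θ}`, and for `E(u) = e^{b(u)+μu}` the
right-hand side is `(β+γ) e^{V(u)+μu}`; the identity follows by the fundamental theorem of
calculus.
-/

open Set intervalIntegral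

section Logistic

variable {E : ℝ → ℝ} {β t : ℝ}

theorem hasDerivAt_one_add_mul_integral (hE : Continuous E) (u : ℝ) :
    HasDerivAt (fun v => 1 + β * ∫ s in (0:ℝ)..v, E s) (β * E u) u :=
  ((hE.integral_hasStrictDerivAt 0 u).hasDerivAt.const_mul β).const_add 1

theorem continuousAt_div_one_add_mul_integral (hE : Continuous E) {u : ℝ}
    (hu : 1 + β * ∫ s in (0:ℝ)..u, E s ≠ 0) :
    ContinuousAt (fun v => E v / (1 + β * ∫ s in (0:ℝ)..v, E s)) u :=
  hE.continuousAt.div (hasDerivAt_one_add_mul_integral hE u).continuousAt hu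

theorem continuousOn_div_one_add_mul_integral (hE : Continuous E)
    (hA : ∀ u ∈ uIcc 0 t, 1 + β * ∫ s in (0:ℝ)..u, E s ≠ 0) :
    ContinuousOn (fun v => E v / (1 + β * ∫ s in (0:ℝ)..v, E s)) (uIcc 0 t) := fun u hu =>
  (continuousAt_div_one_add_mul_integral hE (hA u hu)).continuousWithinAt

theorem hasDerivAt_integral_div_one_add_mul_integral (hE : Continuous E)
    (hA : ∀ u ∈ uIcc 0 t, 1 + β * ∫ s in (0:ℝ)..u, E s ≠ 0) :
    HasDerivAt (fun v => ∫ u in (0:ℝ)..v, E u / (1 + β * ∫ s in (0:ℝ)..u, E s))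
      (E t / (1 + β * ∫ s in (0:ℝ)..t, E s)) t := by
  have hAcont : Continuous fun v => 1 + β * ∫ s in (0:ℝ)..v, E s :=
    continuous_iff_continuousAt.2 fun u => (hasDerivAt_one_add_mul_integral hE u).continuousAt
  exact integral_hasDerivAt_right
    ((continuousOn_div_one_add_mul_integral hE hA).intervalIntegrable)
    (hE.measurable.div hAcont.measurable).stronglyMeasurable.stronglyMeasurableAtFilter
    (continuousAt_div_one_add_mul_integral hE (hA t right_mem_uIcc))

theorem exp_mul_integral_div_one_add_mul_integral (hE : Continuous E)
    (hA : ∀ u ∈ uIcc 0 t, 0 < 1 + β * ∫ s in (0:ℝ)..u, E s) :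
    exp (β * ∫ u in (0:ℝ)..t, E u / (1 + β * ∫ s in (0:ℝ)..u, E s))
      = 1 + β * ∫ s in (0:ℝ)..t, E s := by
  have hθ : IntervalIntegrable (fun u => E u / (1 + β * ∫ s in (0:ℝ)..u, E s)) volume 0 t :=
    (continuousOn_div_one_add_mul_integral hE fun u hu => (hA u hu).ne').intervalIntegrable
  have hlog := integral_eq_sub_of_hasDerivAt
    (fun u hu => by
      simpa only [mul_div_assoc] using
        (hasDerivAt_one_add_mul_integral (β := β) hE u).log (hA u hu).ne')
    (hθ.const_mul β)
  simp only [intervalIntegral.integral_const_mul, intervalIntegral.integral_same, mul_zero,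
    add_zero, log_one, sub_zero] at hlog
  rw [hlog, exp_log (hA t right_mem_uIcc)]

theorem integral_mul_exp_mul_integral_div_one_add_mul_integral (hE : Continuous E)
    (hA : ∀ u ∈ uIcc 0 t, 0 < 1 + β * ∫ s in (0:ℝ)..u, E s) {γ : ℝ}
    (hβγ : β + γ ≠ 0) :
    ∫ u in (0:ℝ)..t,
        E u * exp (γ * ∫ v in (0:ℝ)..u, E v / (1 + β * ∫ s in (0:ℝ)..v, E s))
      = (exp ((β + γ) * ∫ u in (0:ℝ)..t, E u / (1 + β * ∫ s in (0:ℝ)..u, E s)) - 1)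
          / (β + γ) := by
  set Θ := fun v => ∫ u in (0:ℝ)..v, E u / (1 + β * ∫ s in (0:ℝ)..u, E s) with hΘ_def
  have hA_sub : ∀ u ∈ uIcc 0 t, ∀ v ∈ uIcc 0 u, 0 < 1 + β * ∫ s in (0:ℝ)..v, E s :=
    fun u hu v hv => hA v (uIcc_subset_uIcc_left hu hv)
  have hΘ : ∀ u ∈ uIcc 0 t, HasDerivAt Θ (E u / (1 + β * ∫ s in (0:ℝ)..u, E s)) u :=
    fun u hu => hasDerivAt_integral_div_one_add_mul_integral hE fun v hv => (hA_sub u hu v hv).ne'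
  have hexp : ∀ u ∈ uIcc 0 t, exp (β * Θ u) = 1 + β * ∫ s in (0:ℝ)..u, E s :=
    fun u hu => exp_mul_integral_div_one_add_mul_integral hE (hA_sub u hu)
  have hderiv : ∀ u ∈ uIcc 0 t,
      HasDerivAt (fun v => exp ((β + γ) * Θ v) / (β + γ)) (E u * exp (γ * Θ u)) u := by
    intro u hu
    refine (((hΘ u hu).const_mul (β + γ)).exp.div_const (β + γ)).congr_deriv ?_
    rw [add_mul, exp_add, hexp u hu]
    field_simp [(hA u hu).ne']
  have hcont : ContinuousOn (fun u => E u * exp (γ * Θ u)) (uIcc 0 t) :=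
    hE.continuousOn.mul (continuous_exp.comp_continuousOn
      (continuousOn_const.mul fun u hu => (hΘ u hu).continuousAt.continuousWithinAt))
  rw [integral_eq_sub_of_hasDerivAt hderiv hcont.intervalIntegrable, hΘ_def]
  simp only [intervalIntegral.integral_same, mul_zero, exp_zero, sub_div]

end Logistic

theorem integral_exp_V_general (b : ℝ → ℝ) (hb : Continuous b)
    (μ β γ : ℝ) (hβ : 0 ≤ β) (hγ : 0 < γ)
    (V : ℝ → ℝ)
    (hV : ∀ t : ℝ, V t = b t + γ * ∫ u in (0:ℝ)..t, verhulst b μ β u) :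
    ∀ t : ℝ, 0 ≤ t →
      (∫ u in (0:ℝ)..t, Real.exp (V u + μ * u))
        = (1 / (β + γ))
            * (Real.exp ((β + γ) * ∫ u in (0:ℝ)..t, verhulst b μ β u) - 1) := by
  intro t ht
  have hA : ∀ u ∈ uIcc 0 t, 0 < 1 + β * ∫ s in (0:ℝ)..u, exp (b s + μ * s) := by
    intro u hu
    rw [uIcc_of_le ht] at hu
    have : 0 ≤ ∫ s in (0:ℝ)..u, exp (b s + μ * s) :=
      integral_nonneg hu.1 fun s _ => (exp_pos _).le
    positivity
  have hsplit : ∀ u, exp (V u + μ * u)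
      = exp (b u + μ * u) * exp (γ * ∫ v in (0:ℝ)..u, verhulst b μ β v) := by
    intro u
    rw [hV, ← exp_add]
    ring_nf
  simp_rw [hsplit, one_div_mul_eq_div]
  exact integral_mul_exp_mul_integral_div_one_add_mul_integral (by fun_prop) hA (by positivity)

/-- Key pathwise computation in the proof of the Girsanov-invariance theorem:
with `V(t) = b(t) + γ ∫_0^t θ_u du`, for every `t ≥ 0`,
`∫_0^t e^{V(u)+μu} du = (1/(β+γ)) (exp((β+γ) ∫_0^t θ_u du) − 1)`. -/
theorem integral_exp_V (b : ℝ → ℝ) (hb : Continuous b) (hb0 : b 0 = 0)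
    (μ β γ : ℝ) (hβ : 0 ≤ β) (hγ : 0 < γ)
    (V : ℝ → ℝ)
    (hV : ∀ t : ℝ, V t = b t + γ * ∫ u in (0:ℝ)..t, verhulst b μ β u) :
    ∀ t : ℝ, 0 ≤ t →
      (∫ u in (0:ℝ)..t, Real.exp (V u + μ * u))
        = (1 / (β + γ))
            * (Real.exp ((β + γ) * ∫ u in (0:ℝ)..t, verhulst b μ β u) - 1) :=
  integral_exp_V_general b hb μ β γ hβ hγ V hV
end

section
/- Let γ > 0 and define V(t) = b(t) + γ∫_0^t θ_u du. Then for every t ≥ 0, θ_t = e^{V(t)+μt} / (1 + (β+γ)∫_0^t e^{V(u)+μu} du). That is, the Verhulst functional with parameters (μ,β) built from the path b coincides with the Verhulst functional with parameters (μ, β+γ) built from the path V. (Pathwise content of the theorem on Girsanov invariance of the Verhulst process.) -/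
open MeasureTheory Real

/-!
Write `e(s) = e^{b(s)+μs}`, `D = 1 + β ∫_0^· e` and `θ = e / D`. Since `D' = β e` and
`(∫_0^· θ)' = e / D`, the product `D e^{γ ∫_0^· θ}` has derivative `(β + γ) e e^{γ ∫_0^· θ}` and
value `1` at `0`, so it equals `1 + (β + γ) ∫_0^· e e^{γ ∫θ}`. As `e^{V+μt} = e e^{γ ∫_0^· θ}`,
the right-hand side is `e e^{γ ∫θ} / (D e^{γ ∫θ}) = θ`.
-/

open Set intervalIntegral

theorem hasDerivAt_mul_exp_of_deriv_eq_div {e D G : ℝ → ℝ} {β γ x : ℝ}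
    (hD : HasDerivAt D (β * e x) x) (hG : HasDerivAt G (e x / D x) x) (hDx : D x ≠ 0) :
    HasDerivAt (fun s => D s * exp (γ * G s)) ((β + γ) * (e x * exp (γ * G x))) x := by
  refine (hD.mul (hG.const_mul γ).exp).congr_deriv ?_
  field_simp

section

variable {e : ℝ → ℝ} {β a t : ℝ}

theorem continuousOn_div_one_add_mul_integral_s5 (he : Continuous e) :
    ContinuousOn (fun s => e s / (1 + β * ∫ x in a..s, e x))
      {s | 1 + β * ∫ x in a..s, e x ≠ 0} :=
  he.continuousOn.div (continuous_const.add
    (continuous_const.mul (continuous_primitive he.intervalIntegrable a))).continuousOn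
    fun _ hs => hs

theorem one_add_mul_integral_mul_exp_integral_div (γ : ℝ) (he : Continuous e)
    (hD : ∀ s ∈ uIcc a t, 1 + β * ∫ x in a..s, e x ≠ 0) :
    (1 + β * ∫ x in a..t, e x)
        * exp (γ * ∫ s in a..t, e s / (1 + β * ∫ x in a..s, e x))
      = 1 + (β + γ) * ∫ s in a..t,
          e s * exp (γ * ∫ u in a..s, e u / (1 + β * ∫ x in a..u, e x)) := by
  set D : ℝ → ℝ := fun s => 1 + β * ∫ x in a..s, e x
  set θ : ℝ → ℝ := fun s => e s / D s
  set G : ℝ → ℝ := fun s => ∫ u in a..s, θ u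
  have hθ : ContinuousOn θ {s | D s ≠ 0} := continuousOn_div_one_add_mul_integral_s5 he
  have hDc : Continuous D :=
    continuous_const.add (continuous_const.mul (continuous_primitive he.intervalIntegrable a))
  have hDopen : IsOpen {s | D s ≠ 0} := isOpen_ne_fun hDc continuous_const
  have hθint : ∀ s ∈ uIcc a t, IntervalIntegrable θ volume a s := fun s hs =>
    (hθ.mono fun u hu => hD u (uIcc_subset_uIcc_left hs hu)).intervalIntegrable
  have hG : ContinuousOn G (uIcc a t) :=
    continuousOn_primitive_interval ((hθ.mono hD).integrableOn_compact isCompact_uIcc)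
  have hderiv : ∀ x ∈ Ioo (min a t) (max a t),
      HasDerivAt (fun s => D s * exp (γ * G s)) ((β + γ) * (e x * exp (γ * G x))) x := by
    intro x hx
    have hx' : x ∈ uIcc a t := Ioo_subset_Icc_self hx
    refine hasDerivAt_mul_exp_of_deriv_eq_div ?_ ?_ (hD x hx')
    · exact ((he.integral_hasStrictDerivAt a x).hasDerivAt.const_mul β).const_add 1
    · exact integral_hasDerivAt_right (hθint x hx')
        (hθ.stronglyMeasurableAtFilter hDopen x (hD x hx'))
        (hθ.continuousAt (hDopen.mem_nhds (hD x hx')))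
  have hcont : ContinuousOn (fun s => D s * exp (γ * G s)) (uIcc a t) :=
    hDc.continuousOn.mul (continuous_exp.comp_continuousOn (continuousOn_const.mul hG))
  have hint : IntervalIntegrable (fun s => (β + γ) * (e s * exp (γ * G s))) volume a t :=
    (continuousOn_const.mul (he.continuousOn.mul
      (continuous_exp.comp_continuousOn (continuousOn_const.mul hG)))).intervalIntegrable
  have hFTC := integral_eq_sub_of_hasDeriv_right hcont
    (fun x hx => (hderiv x hx).hasDerivWithinAt) hint
  rw [intervalIntegral.integral_const_mul] at hFTC
  have hstart : D a * exp (γ * G a) = 1 := by simp [D, G]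
  change D t * exp (γ * G t) = 1 + (β + γ) * ∫ s in a..t, e s * exp (γ * G s)
  linarith

end

theorem one_add_mul_integral_pos {e : ℝ → ℝ} {β a s : ℝ} (hβ : 0 ≤ β) (he : ∀ x, 0 ≤ e x)
    (hs : a ≤ s) : 0 < 1 + β * ∫ x in a..s, e x := by
  have := mul_nonneg hβ (integral_nonneg (μ := volume) hs fun x _ => he x)
  linarith

theorem verhulst_girsanov_pathwise_general (b : ℝ → ℝ) (hb : Continuous b)
    (μ β γ : ℝ) (hβ : 0 ≤ β)
    (V : ℝ → ℝ)
    (hV : ∀ t : ℝ, V t = b t + γ * ∫ u in (0:ℝ)..t, verhulst b μ β u) :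
    ∀ t : ℝ, 0 ≤ t →
      verhulst b μ β t
        = Real.exp (V t + μ * t)
            / (1 + (β + γ) * ∫ u in (0:ℝ)..t, Real.exp (V u + μ * u)) := by
  intro t ht
  have hexpV : ∀ u, exp (V u + μ * u)
      = exp (b u + μ * u) * exp (γ * ∫ s in (0:ℝ)..u, verhulst b μ β s) := fun u => by
    rw [hV, ← exp_add]
    ring_nf
  have hD : ∀ s ∈ uIcc 0 t, 1 + β * ∫ x in (0:ℝ)..s, exp (b x + μ * x) ≠ 0 := fun s hs =>
    (one_add_mul_integral_pos hβ (fun x => (exp_pos _).le) (uIcc_of_le ht ▸ hs).1).ne'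
  have key : (1 + β * ∫ x in (0:ℝ)..t, exp (b x + μ * x))
        * exp (γ * ∫ s in (0:ℝ)..t, verhulst b μ β s)
      = 1 + (β + γ) * ∫ s in (0:ℝ)..t,
          exp (b s + μ * s) * exp (γ * ∫ u in (0:ℝ)..s, verhulst b μ β u) :=
    one_add_mul_integral_mul_exp_integral_div γ (by fun_prop) hD
  simp only [hexpV, ← key]
  rw [mul_div_mul_right _ _ (exp_ne_zero _)]
  rfl

/-- Pathwise content of the theorem on Girsanov invariance of the Verhulst
process: with `V(t) = b(t) + γ ∫_0^t θ_u du`, for every `t ≥ 0`,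
`θ_t = e^{V(t)+μt} / (1 + (β+γ) ∫_0^t e^{V(u)+μu} du)`, i.e. the Verhulst
functional with parameters `(μ,β)` built from the path `b` coincides with the
Verhulst functional with parameters `(μ,β+γ)` built from the path `V`. -/
theorem verhulst_girsanov_pathwise (b : ℝ → ℝ) (hb : Continuous b) (hb0 : b 0 = 0)
    (μ β γ : ℝ) (hβ : 0 ≤ β) (hγ : 0 < γ)
    (V : ℝ → ℝ)
    (hV : ∀ t : ℝ, V t = b t + γ * ∫ u in (0:ℝ)..t, verhulst b μ β u) :
    ∀ t : ℝ, 0 ≤ t →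
      verhulst b μ β t
        = Real.exp (V t + μ * t)
            / (1 + (β + γ) * ∫ u in (0:ℝ)..t, Real.exp (V u + μ * u)) :=
  verhulst_girsanov_pathwise_general b hb μ β γ hβ V hV
end
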